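/- Fix ε ∈ (0,1) and a sequence (p_n) with 0 ≤ p_n ≤ 1 and p_n ≪ (log n)^{-ε}, and let ψ : ℕ → [0,1/2]. Then there is a constant C' (depending only on ε and the implied constant in the decay hypothesis) such that for all N ∈ ℕ: E[ ∑_{1 ≤ m,n ≤ N} λ(E_m^Q ∩ E_n^Q) ] ≤ C' · [ ( ∑_{n=1}^N p_n ψ(n) )² + ∑_{n=1}^N p_n ψ(n) ], where E denotes expectation over the random choice of P. In particular, if additionally ∑_{n=1}^N p_n ψ(n) ≥ 1, then E[ ∑_{1 ≤ m,n ≤ N} λ(E_m^Q ∩ E_n^Q) ] ≤ 2C' ( ∑_{n=1}^N p_n ψ(n) )². -/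

import Mathlib

open MeasureTheory ProbabilityTheory Filter Set

noncomputable section

/-- The approximation set `⋃_{a ∈ A} ((a-ψ(n))/n, (a+ψ(n))/n)`. -/
def approxSet (A : Set ℕ) (ψ : ℕ → ℝ) (n : ℕ) : Set ℝ :=
  ⋃ a ∈ A, Set.Ioo (((a : ℝ) - ψ n) / n) (((a : ℝ) + ψ n) / n)

/-- The set of partially reduced numerators: `a ∈ {1,…,n}` with `gcd(a,n) ≤ (log n)^{ε/2}`. -/
def Sred (ε : ℝ) (n : ℕ) : Set ℕ :=
  {a | 1 ≤ a ∧ a ≤ n ∧ (Nat.gcd a n : ℝ) ≤ Real.log n ^ (ε / 2)}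

/-- The random approximation set `E_n^Q`, with numerators in `Q_n = P_n ∩ S_n`. -/
def EQset (ε : ℝ) (P : ℕ → Set ℕ) (ψ : ℕ → ℝ) (n : ℕ) : Set ℝ :=
  approxSet (P n ∩ Sred ε n) ψ n

/-!
Expanding `E_m^Q ∩ E_n^Q` into the intervals around `a/m` and `b/n`, the expected overlap is at
most `∑ λ(I_{m,a} ∩ I_{n,b}) ℙ(a ∈ P_m, b ∈ P_n)`. For `m = n` only `a = b` contributes, because
`ψ ≤ 1/2` makes the intervals with a common denominator disjoint; this gives `2 p_m ψ(m)`. For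
`m ≠ n` independence gives the factor `p_m p_n`. Pairs with `an ≠ bm` can only overlap if
`0 < |an - bm| < nψ(m) + mψ(n)`; the value `an - bm` is a multiple of `gcd(m, n)` taken by at most
`gcd(m, n)` pairs, so they contribute `8ψ(m)ψ(n)`. Pairs with `an = bm` contribute at most `2ψ(m)`,
and since `a`, `b` are partially reduced they exist only when `m / gcd(m, n) ≤ (log m)^{ε/2}` and
`n / gcd(m, n) ≤ (log n)^{ε/2}`. For fixed `m` there are at most `2 (log m)^ε` such `n`, all with
`n ≥ √m`, so the decay of `p_n` bounds their total weight `∑ p_n` uniformly in `m`.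
-/

open scoped Finset ENNReal

def approxInterval (ψ : ℕ → ℝ) (n a : ℕ) : Set ℝ :=
  Ioo (((a : ℝ) - ψ n) / n) (((a : ℝ) + ψ n) / n)

section Geometry

variable {ψ : ℕ → ℝ}

lemma volume_approxInterval (ψ : ℕ → ℝ) (n a : ℕ) :
    volume (approxInterval ψ n a) = ENNReal.ofReal (2 * ψ n / n) := by
  rw [approxInterval, Real.volume_Ioo]
  ring_nf

lemma measureReal_approxInterval {n : ℕ} (hψ : 0 ≤ ψ n) (a : ℕ) :
    volume.real (approxInterval ψ n a) = 2 * ψ n / n := by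
  rw [measureReal_def, volume_approxInterval, ENNReal.toReal_ofReal (by positivity)]

lemma measureReal_inter_approxInterval_le_left {m : ℕ} (hψ : 0 ≤ ψ m) (a n b : ℕ) :
    volume.real (approxInterval ψ m a ∩ approxInterval ψ n b) ≤ 2 * ψ m / m := by
  rw [← measureReal_approxInterval hψ a]
  exact measureReal_mono inter_subset_left (by simp [volume_approxInterval])

lemma measureReal_inter_approxInterval_le_right {n : ℕ} (hψ : 0 ≤ ψ n) (m a b : ℕ) :
    volume.real (approxInterval ψ m a ∩ approxInterval ψ n b) ≤ 2 * ψ n / n := by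
  rw [← measureReal_approxInterval hψ b]
  exact measureReal_mono inter_subset_right (by simp [volume_approxInterval])

lemma volume_inter_approxInterval_ne_top (m a n b : ℕ) :
    volume (approxInterval ψ m a ∩ approxInterval ψ n b) ≠ ⊤ :=
  measure_ne_top_of_subset inter_subset_left (by simp [volume_approxInterval])

lemma abs_mul_sub_mul_lt_of_inter_nonempty {m n a b : ℕ} (hm : 0 < m) (hn : 0 < n)
    (h : (approxInterval ψ m a ∩ approxInterval ψ n b).Nonempty) :
    |(a : ℝ) * n - b * m| < n * ψ m + m * ψ n := by
  obtain ⟨x, ⟨hxa₁, hxa₂⟩, ⟨hxb₁, hxb₂⟩⟩ := h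
  have hm' : (0 : ℝ) < m := by exact_mod_cast hm
  have hn' : (0 : ℝ) < n := by exact_mod_cast hn
  rw [div_lt_iff₀ hm'] at hxa₁
  rw [lt_div_iff₀ hm'] at hxa₂
  rw [div_lt_iff₀ hn'] at hxb₁
  rw [lt_div_iff₀ hn'] at hxb₂
  rw [abs_lt]
  constructor <;> nlinarith [mul_lt_mul_of_pos_right hxa₁ hn', mul_lt_mul_of_pos_right hxa₂ hn',
    mul_lt_mul_of_pos_right hxb₁ hm', mul_lt_mul_of_pos_right hxb₂ hm']

lemma disjoint_approxInterval {m a b : ℕ} (hm : 0 < m) (hψ : ψ m ≤ 1 / 2) (hab : a ≠ b) :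
    Disjoint (approxInterval ψ m a) (approxInterval ψ m b) := by
  rw [Set.disjoint_iff_inter_eq_empty, ← Set.not_nonempty_iff_eq_empty]
  intro h
  have hclose := abs_mul_sub_mul_lt_of_inter_nonempty hm hm h
  have hm' : (0 : ℝ) < m := by exact_mod_cast hm
  have hsep : (1 : ℝ) ≤ |(a : ℝ) - b| := by
    exact_mod_cast Int.one_le_abs (sub_ne_zero.2 (Nat.cast_injective.ne hab))
  rw [← sub_mul, abs_mul, abs_of_pos hm'] at hclose
  nlinarith

end Geometry

lemma card_solutions_le_gcd {m : ℕ} (hm : 0 < m) (n : ℕ) (t : ℤ) :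
    #{q ∈ Finset.Icc 1 m ×ˢ Finset.Icc 1 n | (q.1 : ℤ) * n - q.2 * m = t} ≤ m.gcd n := by
  set Q := m / m.gcd n
  have hQ : 0 < Q := Nat.div_pos (Nat.gcd_le_left n hm) (Nat.gcd_pos_of_pos_left n hm)
  have hmQ : m = m.gcd n * Q := (Nat.mul_div_cancel' (Nat.gcd_dvd_left m n)).symm
  calc _ ≤ #(Finset.range (m.gcd n)) := Finset.card_le_card_of_injOn (fun q ↦ (q.1 - 1) / Q) ?_ ?_
    _ = m.gcd n := Finset.card_range _
  · intro q hq
    simp only [Finset.coe_filter, Finset.mem_product, Finset.mem_Icc, Set.mem_ofPred_eq] at hq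
    simp only [Finset.coe_range, Set.mem_Iio]
    exact Nat.div_lt_of_lt_mul (by rw [mul_comm, ← hmQ]; omega)
  · intro q hq q' hq' hdiv
    simp only [Finset.coe_filter, Finset.mem_product, Finset.mem_Icc, Set.mem_ofPred_eq] at hq hq'
    -- numerators of two solutions are congruent mod `Q`, so their block `(a - 1) / Q` pins them
    have hmul : q.1 * n ≡ q'.1 * n [MOD m] :=
      (Nat.modEq_iff_dvd.2 ⟨q'.2 - q.2, by push_cast; linarith [hq.2, hq'.2]⟩)
    have hmod : q.1 - 1 ≡ q'.1 - 1 [MOD Q] := by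
      refine Nat.ModEq.add_right_cancel' 1 ?_
      rw [Nat.sub_add_cancel hq.1.1.1, Nat.sub_add_cancel hq'.1.1.1]
      exact hmul.cancel_right_div_gcd hm
    have h₁ : q.1 = q'.1 := by
      have e := Nat.div_add_mod (q.1 - 1) Q
      have e' := Nat.div_add_mod (q'.1 - 1) Q
      rw [show (q.1 - 1) / Q = (q'.1 - 1) / Q from hdiv, hmod] at e
      omega
    have h₂ : (q.2 : ℤ) * m = q'.2 * m := by rw [h₁] at hq; linarith [hq.2, hq'.2]
    exact Prod.ext h₁ (by exact_mod_cast mul_right_cancel₀ (by positivity) h₂)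

lemma gcd_dvd_mul_sub_mul (m n a b : ℕ) : (m.gcd n : ℤ) ∣ a * n - b * m :=
  dvd_sub (dvd_mul_of_dvd_right (by exact_mod_cast Nat.gcd_dvd_right m n) _)
    (dvd_mul_of_dvd_right (by exact_mod_cast Nat.gcd_dvd_left m n) _)

lemma card_close_solutions_le {m : ℕ} (hm : 0 < m) (n : ℕ) {D : ℝ} (hD : 0 ≤ D) :
    (#{q ∈ Finset.Icc 1 m ×ˢ Finset.Icc 1 n |
        (q.1 : ℤ) * n - q.2 * m ≠ 0 ∧ |(q.1 : ℝ) * n - q.2 * m| ≤ D} : ℝ) ≤ 2 * D := by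
  set s := {q ∈ Finset.Icc 1 m ×ˢ Finset.Icc 1 n |
    (q.1 : ℤ) * n - q.2 * m ≠ 0 ∧ |(q.1 : ℝ) * n - q.2 * m| ≤ D}
  set g := m.gcd n
  set M := ⌊D / g⌋
  have hg : (0 : ℝ) < g := by exact_mod_cast Nat.gcd_pos_of_pos_left n hm
  have hM : 0 ≤ M := Int.floor_nonneg.2 (by positivity)
  -- every value `a n - b m` is a multiple of `g`, and each value is taken at most `g` times
  have hcard := Finset.card_le_mul_card_image_of_maps_to (s := s)
    (f := fun q : ℕ × ℕ ↦ ((q.1 : ℤ) * n - q.2 * m) / g) (t := (Finset.Icc (-M) M).erase 0)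
    ?maps g ?fibres
  · rw [Finset.card_erase_of_mem (by simp [hM]), Int.card_Icc] at hcard
    calc _ ≤ ((g * ((M + 1 - -M).toNat - 1) : ℕ) : ℝ) := by exact_mod_cast hcard
      _ = 2 * g * M := by
        have h2M : (((2 * M).toNat : ℕ) : ℝ) = 2 * M := by
          exact_mod_cast Int.toNat_of_nonneg (by omega : 0 ≤ 2 * M)
        rw [show (M + 1 - -M).toNat - 1 = (2 * M).toNat by omega, Nat.cast_mul, h2M]
        ring
      _ ≤ 2 * g * (D / g) := by gcongr; exact Int.floor_le _
      _ = 2 * D := by field_simp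
  case maps =>
    intro q hq
    simp only [s, Finset.mem_filter] at hq
    obtain ⟨k, hk⟩ := gcd_dvd_mul_sub_mul m n q.1 q.2
    have hk0 : k ≠ 0 := by rintro rfl; exact hq.2.1 (by simpa using hk)
    have hkD : (g : ℝ) * |(k : ℝ)| ≤ D := by
      have hk' : (g : ℝ) * k = (q.1 : ℝ) * n - q.2 * m := by exact_mod_cast hk.symm
      rw [← abs_of_pos hg, ← abs_mul, hk']
      exact hq.2.2
    have hkM : |k| ≤ M := Int.le_floor.2 (by push_cast; rw [le_div_iff₀ hg]; linarith)
    rw [hk, Int.mul_ediv_cancel_left _ (by positivity)]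
    simp only [Finset.mem_erase, Finset.mem_Icc]
    exact ⟨hk0, abs_le.1 hkM⟩
  case fibres =>
    intro k _
    refine (Finset.card_le_card fun q hq ↦ ?_).trans (card_solutions_le_gcd hm n (g * k))
    simp only [s, Finset.mem_filter] at hq ⊢
    refine ⟨hq.1.1, ?_⟩
    rw [← hq.2, Int.mul_ediv_cancel' (gcd_dvd_mul_sub_mul m n q.1 q.2)]

lemma sum_measureReal_inter_of_ne_le {ψ : ℕ → ℝ} {m n : ℕ} (hm : 0 < m) (hn : 0 < n)
    (hψm : 0 ≤ ψ m) (hψn : 0 ≤ ψ n) :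
    ∑ q ∈ Finset.Icc 1 m ×ˢ Finset.Icc 1 n with (q.1 : ℤ) * n - q.2 * m ≠ 0,
      volume.real (approxInterval ψ m q.1 ∩ approxInterval ψ n q.2) ≤ 8 * ψ m * ψ n := by
  set D := n * ψ m + m * ψ n
  set B := min (2 * ψ m / m) (2 * ψ n / n)
  have hD : 0 ≤ D := by positivity
  have hB : 0 ≤ B := le_min (by positivity) (by positivity)
  -- only pairs with `|a n - b m| < D` have overlapping intervals
  rw [← Finset.sum_filter_of_ne (p := fun q ↦ |(q.1 : ℝ) * n - q.2 * m| ≤ D), Finset.filter_filter]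
  · calc _ ≤ _ • B := Finset.sum_le_card_nsmul _ _ _ fun q _ ↦ le_min
            (measureReal_inter_approxInterval_le_left hψm _ _ _)
            (measureReal_inter_approxInterval_le_right hψn _ _ _)
      _ ≤ 2 * D * B := by
        rw [nsmul_eq_mul]
        exact mul_le_mul_of_nonneg_right (card_close_solutions_le hm n hD) hB
      _ = 2 * (n * ψ m) * B + 2 * (m * ψ n) * B := by ring
      _ ≤ 2 * (n * ψ m) * (2 * ψ n / n) + 2 * (m * ψ n) * (2 * ψ m / m) := by
        gcongr
        exacts [min_le_right _ _, min_le_left _ _]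
      _ = 8 * ψ m * ψ n := by field_simp; ring
  · intro q _ hq
    by_contra hfar
    have hempty : approxInterval ψ m q.1 ∩ approxInterval ψ n q.2 = ∅ :=
      Set.not_nonempty_iff_eq_empty.1 fun h ↦ hfar (abs_mul_sub_mul_lt_of_inter_nonempty hm hn h).le
    exact hq (by rw [hempty, measureReal_empty])

instance (ε : ℝ) (n : ℕ) : DecidablePred (· ∈ Sred ε n) :=
  fun _ ↦ inferInstanceAs (Decidable (_ ∧ _ ∧ _))

def redFinset (ε : ℝ) (n : ℕ) : Finset ℕ := {a ∈ Finset.Icc 1 n | a ∈ Sred ε n}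

lemma mem_redFinset {ε : ℝ} {n a : ℕ} : a ∈ redFinset ε n ↔ a ∈ Sred ε n := by
  simp only [redFinset, Finset.mem_filter, Finset.mem_Icc, and_iff_right_iff_imp]
  exact fun h ↦ ⟨h.1, h.2.1⟩

lemma redFinset_subset_Icc (ε : ℝ) (n : ℕ) : redFinset ε n ⊆ Finset.Icc 1 n :=
  Finset.filter_subset _ _

def IsResonant (ε : ℝ) (m n : ℕ) : Prop :=
  ((m / m.gcd n : ℕ) : ℝ) ≤ Real.log m ^ (ε / 2) ∧ ((n / m.gcd n : ℕ) : ℝ) ≤ Real.log n ^ (ε / 2)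

instance (ε : ℝ) (m n : ℕ) : Decidable (IsResonant ε m n) :=
  inferInstanceAs (Decidable (_ ∧ _))

lemma div_gcd_dvd_gcd_of_mul_eq {m n a b : ℕ} (hm : 0 < m) (h : a * n = b * m) :
    m / m.gcd n ∣ a.gcd m :=
  Nat.dvd_gcd (Nat.modEq_zero_iff_dvd.1 <| Nat.ModEq.cancel_right_div_gcd hm <| by
      rw [zero_mul, h, Nat.ModEq, Nat.mul_mod_left, Nat.zero_mod])
    (Nat.div_dvd_of_dvd (Nat.gcd_dvd_left m n))

lemma isResonant_of_mul_eq {ε : ℝ} {m n a b : ℕ} (ha : a ∈ Sred ε m) (hb : b ∈ Sred ε n)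
    (h : a * n = b * m) : IsResonant ε m n := by
  obtain ⟨ha₁, ham, haS⟩ := ha
  obtain ⟨hb₁, hbn, hbS⟩ := hb
  constructor
  · refine le_trans ?_ haS
    exact_mod_cast Nat.le_of_dvd (Nat.gcd_pos_of_pos_left _ ha₁)
      (div_gcd_dvd_gcd_of_mul_eq (by omega) h)
  · refine le_trans ?_ hbS
    rw [Nat.gcd_comm]
    exact_mod_cast Nat.le_of_dvd (Nat.gcd_pos_of_pos_left _ hb₁)
      (div_gcd_dvd_gcd_of_mul_eq (by omega) h.symm)

lemma sum_measureReal_inter_of_eq_le {ψ : ℕ → ℝ} {ε : ℝ} {m : ℕ} (hm : 0 < m)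
    (hψm : 0 ≤ ψ m) (n : ℕ) :
    ∑ q ∈ redFinset ε m ×ˢ redFinset ε n with (q.1 : ℤ) * n - q.2 * m = 0,
      volume.real (approxInterval ψ m q.1 ∩ approxInterval ψ n q.2)
      ≤ if IsResonant ε m n then 2 * ψ m else 0 := by
  split_ifs with hres
  · have hcard : #{q ∈ redFinset ε m ×ˢ redFinset ε n | (q.1 : ℤ) * n - q.2 * m = 0} ≤ m :=
      calc _ ≤ #{q ∈ Finset.Icc 1 m ×ˢ Finset.Icc 1 n | (q.1 : ℤ) * n - q.2 * m = 0} :=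
            Finset.card_le_card (Finset.filter_subset_filter _
              (Finset.product_subset_product (redFinset_subset_Icc ε m) (redFinset_subset_Icc ε n)))
        _ ≤ m.gcd n := card_solutions_le_gcd hm n 0
        _ ≤ m := Nat.gcd_le_left n hm
    calc _ ≤ _ • (2 * ψ m / m) := Finset.sum_le_card_nsmul _ _ _ fun q _ ↦
          measureReal_inter_approxInterval_le_left hψm _ _ _
      _ ≤ m * (2 * ψ m / m) := by rw [nsmul_eq_mul]; gcongr
      _ = 2 * ψ m := by field_simp
  · refine (Finset.sum_eq_zero fun q hq ↦ absurd ?_ hres).le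
    simp only [Finset.mem_filter, Finset.mem_product, mem_redFinset, sub_eq_zero] at hq
    exact isResonant_of_mul_eq hq.1.1 hq.1.2 (by exact_mod_cast hq.2)

lemma sum_sum_measureReal_inter_le {ψ : ℕ → ℝ} {ε : ℝ} {m n : ℕ} (hm : 0 < m) (hn : 0 < n)
    (hψm : 0 ≤ ψ m) (hψn : 0 ≤ ψ n) :
    ∑ a ∈ redFinset ε m, ∑ b ∈ redFinset ε n,
      volume.real (approxInterval ψ m a ∩ approxInterval ψ n b)
      ≤ 8 * ψ m * ψ n + if IsResonant ε m n then 2 * ψ m else 0 := by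
  rw [← Finset.sum_product', ← Finset.sum_filter_not_add_sum_filter _
    (fun q : ℕ × ℕ ↦ (q.1 : ℤ) * n - q.2 * m = 0)]
  refine add_le_add ?_ (sum_measureReal_inter_of_eq_le hm hψm n)
  refine le_trans ?_ (sum_measureReal_inter_of_ne_le hm hn hψm hψn)
  exact Finset.sum_le_sum_of_subset_of_nonneg (Finset.filter_subset_filter _
    (Finset.product_subset_product (redFinset_subset_Icc ε m) (redFinset_subset_Icc ε n)))
    fun _ _ _ ↦ measureReal_nonneg

lemma log_rpow_le_sqrt {x s : ℝ} (hx : 1 ≤ x) (hs0 : 0 ≤ s) (hs : s ≤ 1 / 2) :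
    Real.log x ^ s ≤ √x := by
  have hlog := Real.log_nonneg hx
  rcases le_total (Real.log x) 1 with h | h
  · exact (Real.rpow_le_one hlog h hs0).trans (Real.one_le_sqrt.2 hx)
  · calc Real.log x ^ s ≤ Real.log x ^ (1 / 2 : ℝ) := Real.rpow_le_rpow_of_exponent_le h hs
      _ = √(Real.log x) := (Real.sqrt_eq_rpow _).symm
      _ ≤ √x := Real.sqrt_le_sqrt (Real.log_le_self (by linarith))

section Resonance

variable {ε : ℝ}

lemma le_sq_of_div_gcd_le (hε0 : 0 ≤ ε) (hε1 : ε ≤ 1) {m n : ℕ} (hn : 0 < n)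
    (h : ((m / m.gcd n : ℕ) : ℝ) ≤ Real.log m ^ (ε / 2)) : m ≤ n ^ 2 := by
  rcases Nat.eq_zero_or_pos m with rfl | hm
  · exact Nat.zero_le _
  have hm' : (1 : ℝ) ≤ m := by exact_mod_cast hm
  have hmn : (m : ℝ) ≤ n * √m :=
    calc (m : ℝ) = m.gcd n * (m / m.gcd n : ℕ) := by
          exact_mod_cast (Nat.mul_div_cancel' (Nat.gcd_dvd_left m n)).symm
      _ ≤ n * √m := by
          gcongr
          · exact_mod_cast Nat.gcd_le_right m hn
          · exact h.trans (log_rpow_le_sqrt hm' (by linarith) (by linarith))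
  have hsqrt : √(m : ℝ) ≤ n := by
    have hpos : 0 < √(m : ℝ) := Real.sqrt_pos.2 (by linarith)
    nlinarith [Real.mul_self_sqrt (by linarith : (0 : ℝ) ≤ m)]
  exact_mod_cast (Real.sqrt_le_left (Nat.cast_nonneg n)).1 hsqrt

lemma div_gcd_le_of_isResonant (hε0 : 0 ≤ ε) (hε1 : ε ≤ 1) {m n : ℕ} (hm : 0 < m) (hn : 0 < n)
    (h : IsResonant ε m n) : ((n / m.gcd n : ℕ) : ℝ) ≤ 2 * Real.log m ^ (ε / 2) := by
  have hlog : 0 ≤ Real.log m := Real.log_natCast_nonneg m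
  have hnm : n ≤ m ^ 2 := le_sq_of_div_gcd_le hε0 hε1 hm (by rw [Nat.gcd_comm]; exact h.2)
  calc _ ≤ Real.log n ^ (ε / 2) := h.2
    _ ≤ (2 * Real.log m) ^ (ε / 2) := by
      gcongr
      have := Real.log_le_log (by exact_mod_cast hn)
        (by exact_mod_cast hnm : (n : ℝ) ≤ (m : ℝ) ^ 2)
      rwa [Real.log_pow, Nat.cast_ofNat] at this
    _ = 2 ^ (ε / 2) * Real.log m ^ (ε / 2) := Real.mul_rpow (by norm_num) hlog
    _ ≤ 2 * Real.log m ^ (ε / 2) := by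
      gcongr
      exact (Real.rpow_le_rpow_of_exponent_le (by norm_num) (by linarith)).trans_eq
        (Real.rpow_one 2)

lemma card_resonant_le (hε0 : 0 ≤ ε) (hε1 : ε ≤ 1) {m : ℕ} (hm : 0 < m) (N : ℕ) :
    (#{n ∈ Finset.Icc 1 N | IsResonant ε m n} : ℝ) ≤ 2 * Real.log m ^ ε := by
  set L := Real.log m ^ (ε / 2)
  have hlog : 0 ≤ Real.log m := Real.log_natCast_nonneg m
  have hL : 0 ≤ L := Real.rpow_nonneg hlog _
  -- `n` is determined by the pair `(m / gcd m n, n / gcd m n)`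
  have hinj := Finset.card_le_card_of_injOn (fun n ↦ (m / m.gcd n, n / m.gcd n))
    (s := {n ∈ Finset.Icc 1 N | IsResonant ε m n})
    (t := Finset.Icc 1 ⌊L⌋₊ ×ˢ Finset.Icc 1 ⌊2 * L⌋₊) ?maps ?inj
  · calc _ ≤ ((#(Finset.Icc 1 ⌊L⌋₊ ×ˢ Finset.Icc 1 ⌊2 * L⌋₊) : ℕ) : ℝ) := by exact_mod_cast hinj
      _ = ⌊L⌋₊ * ⌊2 * L⌋₊ := by simp
      _ ≤ L * (2 * L) := by gcongr <;> exact Nat.floor_le (by positivity)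
      _ = 2 * Real.log m ^ ε := by
        rw [mul_left_comm, ← Real.rpow_add_of_nonneg hlog (by linarith) (by linarith)]
        ring_nf
  case maps =>
    intro n hn
    simp only [Finset.coe_filter, Finset.mem_Icc, Set.mem_ofPred_eq] at hn
    simp only [Finset.coe_product, Finset.coe_Icc, Set.mem_prod, Set.mem_Icc]
    exact ⟨⟨Nat.div_pos (Nat.gcd_le_left n hm) (Nat.gcd_pos_of_pos_left n hm), Nat.le_floor hn.2.1⟩,
      ⟨Nat.div_pos (Nat.gcd_le_right _ (by omega)) (Nat.gcd_pos_of_pos_left n hm),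
        Nat.le_floor (div_gcd_le_of_isResonant hε0 hε1 hm (by omega) hn.2)⟩⟩
  case inj =>
    intro n₁ _ n₂ _ h
    simp only [Prod.mk.injEq] at h
    have hg : m.gcd n₁ = m.gcd n₂ := by
      rw [← Nat.div_div_self (Nat.gcd_dvd_left m n₁) hm.ne',
        ← Nat.div_div_self (Nat.gcd_dvd_left m n₂) hm.ne', h.1]
    rw [← Nat.mul_div_cancel' (Nat.gcd_dvd_right m n₁),
      ← Nat.mul_div_cancel' (Nat.gcd_dvd_right m n₂), h.2, hg]

lemma le_of_isResonant (hε0 : 0 ≤ ε) (hε1 : ε ≤ 1) {C : ℝ} (hC : 0 ≤ C) {p : ℕ → ℝ}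
    {M m n : ℕ} (hdecay : ∀ n ≥ M, p n ≤ C * Real.log n ^ (-ε)) (hMm : M ^ 2 ≤ m)
    (hm : 2 ≤ m) (hn : 0 < n) (h : IsResonant ε m n) :
    p n ≤ 2 * C * Real.log m ^ (-ε) := by
  have hmn : m ≤ n ^ 2 := le_sq_of_div_gcd_le hε0 hε1 hn h.1
  have hMn : M ≤ n := (Nat.pow_le_pow_iff_left two_ne_zero).1 (hMm.trans hmn)
  have hlogm : 0 < Real.log m := Real.log_pos (by exact_mod_cast hm)
  have hlogn : Real.log m / 2 ≤ Real.log n := by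
    have := Real.log_le_log (by positivity) (by exact_mod_cast hmn : (m : ℝ) ≤ n ^ 2)
    rw [Real.log_pow] at this
    push_cast at this
    linarith
  calc p n ≤ C * Real.log n ^ (-ε) := hdecay n hMn
    _ ≤ C * (Real.log m / 2) ^ (-ε) :=
      mul_le_mul_of_nonneg_left (Real.rpow_le_rpow_of_nonpos (by positivity) hlogn (by linarith)) hC
    _ = 2 ^ ε * (C * Real.log m ^ (-ε)) := by
      rw [Real.div_rpow hlogm.le (by norm_num), Real.rpow_neg (by norm_num : (0 : ℝ) ≤ 2),
        div_inv_eq_mul]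
      ring
    _ ≤ 2 * (C * Real.log m ^ (-ε)) := by
      gcongr
      exact (Real.rpow_le_rpow_of_exponent_le (by norm_num) hε1).trans_eq (Real.rpow_one 2)
    _ = 2 * C * Real.log m ^ (-ε) := by ring

lemma exists_sum_resonant_le (hε0 : 0 ≤ ε) (hε1 : ε ≤ 1) {p : ℕ → ℝ} (hp : ∀ n, p n ≤ 1) {C : ℝ}
    (hdecay : ∀ᶠ n : ℕ in atTop, p n ≤ C * Real.log n ^ (-ε)) :
    ∃ K, 0 ≤ K ∧ ∀ m, 0 < m → ∀ N, ∑ n ∈ Finset.Icc 1 N with IsResonant ε m n, p n ≤ K := by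
  set C' := max C 0
  obtain ⟨M, hM⟩ := eventually_atTop.1 <| hdecay.mono fun n h ↦ h.trans <|
    mul_le_mul_of_nonneg_right (le_max_left C 0) (Real.rpow_nonneg (Real.log_natCast_nonneg n) _)
  set M₀ := M ^ 2 + 2
  refine ⟨max (2 * Real.log M₀ ^ ε) (4 * C'), le_max_of_le_right (by positivity), fun m hm N ↦ ?_⟩
  rcases lt_or_ge m M₀ with hsmall | hlarge
  · calc _ ≤ ∑ n ∈ Finset.Icc 1 N with IsResonant ε m n, (1 : ℝ) := Finset.sum_le_sum fun n _ ↦ hp n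
      _ ≤ 2 * Real.log m ^ ε := by simpa using card_resonant_le hε0 hε1 hm N
      _ ≤ 2 * Real.log M₀ ^ ε := by gcongr
      _ ≤ _ := le_max_left _ _
  · have hlogm : 0 < Real.log m := Real.log_pos (by exact_mod_cast (by omega : 1 < m))
    calc _ ≤ _ • (2 * C' * Real.log m ^ (-ε)) := Finset.sum_le_card_nsmul _ _ _ fun n hn ↦ by
          simp only [Finset.mem_filter, Finset.mem_Icc] at hn
          exact le_of_isResonant hε0 hε1 (le_max_right C 0) hM (by omega) (by omega) (by omega) hn.2
      _ ≤ 2 * Real.log m ^ ε * (2 * C' * Real.log m ^ (-ε)) := by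
        rw [nsmul_eq_mul]
        gcongr
        exact card_resonant_le hε0 hε1 hm N
      _ = 4 * C' := by
        rw [Real.rpow_neg hlogm.le]
        field_simp
        ring
      _ ≤ _ := le_max_right _ _

end Resonance

lemma measure_biUnion_inter_biUnion_le {α Ω ι κ : Type*} [MeasurableSpace α] (ν : Measure α)
    (s : Finset ι) (t : Finset κ) (X : ι → Set Ω) (Y : κ → Set Ω) (I : ι → Set α)
    (J : κ → Set α) (ω : Ω) :
    ν ((⋃ i ∈ s, ⋃ (_ : ω ∈ X i), I i) ∩ ⋃ j ∈ t, ⋃ (_ : ω ∈ Y j), J j)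
      ≤ ∑ i ∈ s, ∑ j ∈ t, (X i ∩ Y j).indicator (fun _ ↦ ν (I i ∩ J j)) ω := by
  classical
  calc _ ≤ ν (⋃ i ∈ s, ⋃ j ∈ t, ⋃ (_ : ω ∈ X i ∩ Y j), I i ∩ J j) := by
        refine measure_mono fun x ⟨hx₁, hx₂⟩ ↦ ?_
        simp only [Set.mem_iUnion, exists_prop] at hx₁ hx₂ ⊢
        obtain ⟨i, hi, hωi, hxi⟩ := hx₁
        obtain ⟨j, hj, hωj, hxj⟩ := hx₂
        exact ⟨i, hi, j, hj, ⟨hωi, hωj⟩, hxi, hxj⟩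
    _ ≤ ∑ i ∈ s, ∑ j ∈ t, ν (⋃ (_ : ω ∈ X i ∩ Y j), I i ∩ J j) :=
        (measure_biUnion_finset_le _ _).trans <| Finset.sum_le_sum fun i _ ↦
          measure_biUnion_finset_le _ _
    _ = _ := by
        refine Finset.sum_congr rfl fun i _ ↦ Finset.sum_congr rfl fun j _ ↦ ?_
        by_cases hω : ω ∈ X i ∩ Y j <;> simp [hω]

section Random

variable {Ω : Type*} [MeasurableSpace Ω] {μ : Measure Ω}

lemma measure_inter_eq_mul_of_iIndepSet {ι : Type*} {A : ι → Set Ω} (h : iIndepSet A μ)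
    {i j : ι} (hij : i ≠ j) : μ (A i ∩ A j) = μ (A i) * μ (A j) := by
  classical
  simpa [Finset.set_biInter_insert, Finset.prod_insert, hij] using h.meas_biInter {i, j}

lemma lintegral_sum_sum {ι κ : Type*} (s : Finset ι) (t : Finset κ) {f : ι → κ → Ω → ℝ≥0∞}
    (hf : ∀ i j, Measurable (f i j)) :
    ∫⁻ ω, ∑ i ∈ s, ∑ j ∈ t, f i j ω ∂μ = ∑ i ∈ s, ∑ j ∈ t, ∫⁻ ω, f i j ω ∂μ := by
  rw [lintegral_finsetSum _ fun i _ ↦ Finset.measurable_sum _ fun j _ ↦ hf i j]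
  exact Finset.sum_congr rfl fun i _ ↦ lintegral_finsetSum _ fun j _ ↦ hf i j

end Random

lemma EQset_eq (ε : ℝ) (P : ℕ → Set ℕ) (ψ : ℕ → ℝ) (m : ℕ) :
    EQset ε P ψ m = ⋃ a ∈ redFinset ε m, ⋃ (_ : a ∈ P m), approxInterval ψ m a := by
  ext x
  simp only [EQset, approxSet, approxInterval, Set.mem_iUnion, Set.mem_inter_iff, exists_prop,
    mem_redFinset]
  exact ⟨fun ⟨a, ⟨hP, hS⟩, hx⟩ ↦ ⟨a, hS, hP, hx⟩, fun ⟨a, hS, hP, hx⟩ ↦ ⟨a, ⟨hP, hS⟩, hx⟩⟩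

def overlapBound (ε : ℝ) (p ψ : ℕ → ℝ) (m n : ℕ) : ℝ :=
  8 * (p m * ψ m) * (p n * ψ n) + (if m = n then 2 * (p m * ψ m) else 0)
    + 2 * (p m * ψ m) * (if IsResonant ε m n then p n else 0)

lemma overlapBound_nonneg {ε : ℝ} {p ψ : ℕ → ℝ} (hp : ∀ n, 0 ≤ p n) (hψ : ∀ n, 0 ≤ ψ n)
    (m n : ℕ) : 0 ≤ overlapBound ε p ψ m n := by
  have := hp m; have := hp n; have := hψ m; have := hψ n
  unfold overlapBound
  positivity

lemma sum_sum_overlapBound_le {ε K : ℝ} {p ψ : ℕ → ℝ} (hp : ∀ n, 0 ≤ p n) (hψ : ∀ n, 0 ≤ ψ n)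
    (s : Finset ℕ) (hK : ∀ m ∈ s, ∑ n ∈ s with IsResonant ε m n, p n ≤ K) :
    ∑ m ∈ s, ∑ n ∈ s, overlapBound ε p ψ m n
      ≤ 8 * (∑ n ∈ s, p n * ψ n) ^ 2 + 2 * ∑ n ∈ s, p n * ψ n + 2 * K * ∑ n ∈ s, p n * ψ n := by
  have hsq : ∑ m ∈ s, ∑ n ∈ s, 8 * (p m * ψ m) * (p n * ψ n) = 8 * (∑ n ∈ s, p n * ψ n) ^ 2 := by
    rw [sq, Finset.sum_mul_sum, Finset.mul_sum]
    refine Finset.sum_congr rfl fun m _ ↦ ?_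
    rw [Finset.mul_sum]
    exact Finset.sum_congr rfl fun n _ ↦ by ring
  have hdiag : ∑ m ∈ s, ∑ n ∈ s, (if m = n then 2 * (p m * ψ m) else 0)
      = 2 * ∑ n ∈ s, p n * ψ n := by
    simp [Finset.sum_ite_eq, Finset.mul_sum]
  have hres : ∑ m ∈ s, ∑ n ∈ s, 2 * (p m * ψ m) * (if IsResonant ε m n then p n else 0)
      ≤ 2 * K * ∑ n ∈ s, p n * ψ n :=
    calc _ = ∑ m ∈ s, 2 * (p m * ψ m) * ∑ n ∈ s with IsResonant ε m n, p n := by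
          simp_rw [← Finset.mul_sum, Finset.sum_filter]
      _ ≤ ∑ m ∈ s, 2 * (p m * ψ m) * K := Finset.sum_le_sum fun m hm ↦
          mul_le_mul_of_nonneg_left (hK m hm) (by have := hp m; have := hψ m; positivity)
      _ = 2 * K * ∑ n ∈ s, p n * ψ n := by
          rw [Finset.mul_sum]
          exact Finset.sum_congr rfl fun m _ ↦ by ring
  simp only [overlapBound, Finset.sum_add_distrib]
  linarith

section Model

variable {Ω : Type*} [MeasurableSpace Ω] {μ : Measure Ω} {ε : ℝ} {p ψ : ℕ → ℝ}
  {P : Ω → ℕ → Set ℕ}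

lemma sum_sum_volume_mul_measure_self_le
    (hPprob : ∀ n a : ℕ, 1 ≤ a → a ≤ n → μ {ω | a ∈ P ω n} = ENNReal.ofReal (p n))
    {m : ℕ} (hm : 0 < m) (hψ0 : 0 ≤ ψ m) (hψ1 : ψ m ≤ 1 / 2) :
    ∑ a ∈ redFinset ε m, ∑ b ∈ redFinset ε m,
      volume (approxInterval ψ m a ∩ approxInterval ψ m b) * μ ({ω | a ∈ P ω m} ∩ {ω | b ∈ P ω m})
      ≤ ENNReal.ofReal (2 * (p m * ψ m)) := by
  -- only `b = a` contributes: intervals with a common denominator are disjoint as `ψ ≤ 1/2`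
  have hdiag : ∀ a ∈ redFinset ε m, ∑ b ∈ redFinset ε m,
      volume (approxInterval ψ m a ∩ approxInterval ψ m b) * μ ({ω | a ∈ P ω m} ∩ {ω | b ∈ P ω m})
      = ENNReal.ofReal (2 * ψ m / m * p m) := by
    intro a ha
    rw [Finset.sum_eq_single_of_mem a ha fun b _ hba ↦ by
      rw [(disjoint_approxInterval hm hψ1 (Ne.symm hba)).inter_eq, measure_empty, zero_mul]]
    have ha' := (redFinset_subset_Icc ε m) ha
    rw [Finset.mem_Icc] at ha'
    rw [Set.inter_self, Set.inter_self, volume_approxInterval, hPprob m a ha'.1 ha'.2,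
      ENNReal.ofReal_mul (by positivity)]
  calc _ = ∑ a ∈ redFinset ε m, ENNReal.ofReal (2 * ψ m / m * p m) := Finset.sum_congr rfl hdiag
    _ ≤ ∑ a ∈ Finset.Icc 1 m, ENNReal.ofReal (2 * ψ m / m * p m) :=
      Finset.sum_le_sum_of_subset (redFinset_subset_Icc ε m)
    _ = ENNReal.ofReal (m * (2 * ψ m / m * p m)) := by
      rw [Finset.sum_const, Nat.card_Icc, Nat.add_sub_cancel, nsmul_eq_mul,
        ENNReal.ofReal_mul (Nat.cast_nonneg m), ENNReal.ofReal_natCast]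
    _ = ENNReal.ofReal (2 * (p m * ψ m)) := by
      congr 1
      field_simp

lemma sum_sum_volume_mul_measure_of_ne_le
    (hPprob : ∀ n a : ℕ, 1 ≤ a → a ≤ n → μ {ω | a ∈ P ω n} = ENNReal.ofReal (p n))
    (hPindep : iIndepSet (fun q : ℕ × ℕ => {ω | q.2 ∈ P ω q.1}) μ)
    (hp : ∀ n, 0 ≤ p n) {m n : ℕ} (hm : 0 < m) (hn : 0 < n) (hmn : m ≠ n)
    (hψm : 0 ≤ ψ m) (hψn : 0 ≤ ψ n) :
    ∑ a ∈ redFinset ε m, ∑ b ∈ redFinset ε n,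
      volume (approxInterval ψ m a ∩ approxInterval ψ n b) * μ ({ω | a ∈ P ω m} ∩ {ω | b ∈ P ω n})
      ≤ ENNReal.ofReal (overlapBound ε p ψ m n) := by
  have hindep : ∀ a ∈ redFinset ε m, ∀ b ∈ redFinset ε n,
      μ ({ω | a ∈ P ω m} ∩ {ω | b ∈ P ω n}) = ENNReal.ofReal (p m * p n) := by
    intro a ha b hb
    have ha' := Finset.mem_Icc.1 ((redFinset_subset_Icc ε m) ha)
    have hb' := Finset.mem_Icc.1 ((redFinset_subset_Icc ε n) hb)
    rw [measure_inter_eq_mul_of_iIndepSet hPindep (i := (m, a)) (j := (n, b))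
      (fun h ↦ hmn (congrArg Prod.fst h)), hPprob m a ha'.1 ha'.2, hPprob n b hb'.1 hb'.2,
      ENNReal.ofReal_mul (hp m)]
  have hvol : ∑ a ∈ redFinset ε m, ∑ b ∈ redFinset ε n,
      volume (approxInterval ψ m a ∩ approxInterval ψ n b) = ENNReal.ofReal
        (∑ a ∈ redFinset ε m, ∑ b ∈ redFinset ε n,
          volume.real (approxInterval ψ m a ∩ approxInterval ψ n b)) := by
    rw [ENNReal.ofReal_sum_of_nonneg fun a _ ↦ Finset.sum_nonneg fun b _ ↦ measureReal_nonneg]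
    refine Finset.sum_congr rfl fun a _ ↦ ?_
    rw [ENNReal.ofReal_sum_of_nonneg fun b _ ↦ measureReal_nonneg]
    exact Finset.sum_congr rfl fun b _ ↦
      (ofReal_measureReal (volume_inter_approxInterval_ne_top m a n b)).symm
  calc _ = (∑ a ∈ redFinset ε m, ∑ b ∈ redFinset ε n,
        volume (approxInterval ψ m a ∩ approxInterval ψ n b)) * ENNReal.ofReal (p m * p n) := by
        rw [Finset.sum_mul]
        refine Finset.sum_congr rfl fun a ha ↦ ?_
        rw [Finset.sum_mul]
        exact Finset.sum_congr rfl fun b hb ↦ by rw [hindep a ha b hb]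
    _ ≤ ENNReal.ofReal (8 * ψ m * ψ n + if IsResonant ε m n then 2 * ψ m else 0)
        * ENNReal.ofReal (p m * p n) := by
        rw [hvol]
        gcongr
        exact sum_sum_measureReal_inter_le hm hn hψm hψn
    _ = ENNReal.ofReal (overlapBound ε p ψ m n) := by
        rw [← ENNReal.ofReal_mul (by positivity), overlapBound, if_neg hmn]
        congr 1
        split_ifs <;> ring

lemma sum_sum_volume_mul_measure_le
    (hPprob : ∀ n a : ℕ, 1 ≤ a → a ≤ n → μ {ω | a ∈ P ω n} = ENNReal.ofReal (p n))
    (hPindep : iIndepSet (fun q : ℕ × ℕ => {ω | q.2 ∈ P ω q.1}) μ)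
    (hp : ∀ n, 0 ≤ p n) (hψ : ∀ k, ψ k ∈ Set.Icc (0 : ℝ) (1 / 2)) {m n : ℕ} (hm : 0 < m)
    (hn : 0 < n) :
    ∑ a ∈ redFinset ε m, ∑ b ∈ redFinset ε n,
      volume (approxInterval ψ m a ∩ approxInterval ψ n b) * μ ({ω | a ∈ P ω m} ∩ {ω | b ∈ P ω n})
      ≤ ENNReal.ofReal (overlapBound ε p ψ m n) := by
  rcases eq_or_ne m n with rfl | hmn
  · refine (sum_sum_volume_mul_measure_self_le hPprob hm (hψ m).1 (hψ m).2).trans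
      (ENNReal.ofReal_le_ofReal ?_)
    have := hp m; have := (hψ m).1
    rw [overlapBound, if_pos rfl]
    exact le_add_of_le_of_nonneg (le_add_of_nonneg_left (by positivity)) (by positivity)
  · exact sum_sum_volume_mul_measure_of_ne_le hPprob hPindep hp hm hn hmn (hψ m).1 (hψ n).1

lemma lintegral_sum_sum_volume_EQset_inter_le
    (hPmeas : ∀ n a : ℕ, MeasurableSet {ω | a ∈ P ω n})
    (hPprob : ∀ n a : ℕ, 1 ≤ a → a ≤ n → μ {ω | a ∈ P ω n} = ENNReal.ofReal (p n))
    (hPindep : iIndepSet (fun q : ℕ × ℕ => {ω | q.2 ∈ P ω q.1}) μ)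
    (hp : ∀ n, 0 ≤ p n) (hψ : ∀ k, ψ k ∈ Set.Icc (0 : ℝ) (1 / 2))
    (s : Finset ℕ) (hs : ∀ m ∈ s, 0 < m) :
    ∫⁻ ω, ∑ m ∈ s, ∑ n ∈ s, volume (EQset ε (P ω) ψ m ∩ EQset ε (P ω) ψ n) ∂μ
      ≤ ENNReal.ofReal (∑ m ∈ s, ∑ n ∈ s, overlapBound ε p ψ m n) := by
  set A : ℕ → ℕ → Set Ω := fun n a ↦ {ω | a ∈ P ω n}
  have hA : ∀ m a n b, MeasurableSet (A m a ∩ A n b) :=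
    fun m a n b ↦ (hPmeas m a).inter (hPmeas n b)
  have hψ0 : ∀ k, 0 ≤ ψ k := fun k ↦ (hψ k).1
  calc _ ≤ ∫⁻ ω, ∑ m ∈ s, ∑ n ∈ s, ∑ a ∈ redFinset ε m, ∑ b ∈ redFinset ε n,
          (A m a ∩ A n b).indicator
            (fun _ ↦ volume (approxInterval ψ m a ∩ approxInterval ψ n b)) ω ∂μ :=
        lintegral_mono fun ω ↦ Finset.sum_le_sum fun m _ ↦ Finset.sum_le_sum fun n _ ↦ by
          rw [EQset_eq, EQset_eq]
          exact measure_biUnion_inter_biUnion_le _ _ _ (A m) (A n) _ _ ω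
    _ = ∑ m ∈ s, ∑ n ∈ s, ∑ a ∈ redFinset ε m, ∑ b ∈ redFinset ε n,
          volume (approxInterval ψ m a ∩ approxInterval ψ n b) * μ (A m a ∩ A n b) := by
        rw [lintegral_sum_sum _ _ fun m n ↦ Finset.measurable_sum _ fun a _ ↦
          Finset.measurable_sum _ fun b _ ↦ measurable_const.indicator (hA m a n b)]
        refine Finset.sum_congr rfl fun m _ ↦ Finset.sum_congr rfl fun n _ ↦ ?_
        rw [lintegral_sum_sum _ _ fun a b ↦ measurable_const.indicator (hA m a n b)]
        exact Finset.sum_congr rfl fun a _ ↦ Finset.sum_congr rfl fun b _ ↦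
          lintegral_indicator_const (hA m a n b) _
    _ ≤ ∑ m ∈ s, ∑ n ∈ s, ENNReal.ofReal (overlapBound ε p ψ m n) :=
        Finset.sum_le_sum fun m hm ↦ Finset.sum_le_sum fun n hn ↦
          sum_sum_volume_mul_measure_le hPprob hPindep hp hψ (hs m hm) (hs n hn)
    _ = _ := by
        rw [ENNReal.ofReal_sum_of_nonneg fun m _ ↦ Finset.sum_nonneg fun n _ ↦
          overlapBound_nonneg hp hψ0 m n]
        exact Finset.sum_congr rfl fun m _ ↦
          (ENNReal.ofReal_sum_of_nonneg fun n _ ↦ overlapBound_nonneg hp hψ0 m n).symm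

end Model

theorem stmt7_general
    {Ω : Type*} [MeasurableSpace Ω] (μ : Measure Ω)
    (ε : ℝ) (hε : ε ∈ Set.Ioo (0 : ℝ) 1)
    (p : ℕ → ℝ) (hp : ∀ n, p n ∈ Set.Icc (0 : ℝ) 1)
    (C : ℝ) (hdecay : ∀ᶠ n : ℕ in atTop, p n ≤ C * Real.log n ^ (-ε))
    (P : Ω → ℕ → Set ℕ)
    (hPmeas : ∀ n a : ℕ, MeasurableSet {ω | a ∈ P ω n})
    (hPprob : ∀ n a : ℕ, 1 ≤ a → a ≤ n → μ {ω | a ∈ P ω n} = ENNReal.ofReal (p n))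
    (hPindep : iIndepSet (fun q : ℕ × ℕ => {ω | q.2 ∈ P ω q.1}) μ)
    (ψ : ℕ → ℝ) (hψ : ∀ k, ψ k ∈ Set.Icc (0 : ℝ) (1 / 2)) :
    ∃ C' > (0 : ℝ), ∀ N : ℕ,
      (∫⁻ ω, ∑ m ∈ Finset.Icc 1 N, ∑ n ∈ Finset.Icc 1 N,
          volume (EQset ε (P ω) ψ m ∩ EQset ε (P ω) ψ n) ∂μ
        ≤ ENNReal.ofReal (C' * ((∑ n ∈ Finset.Icc 1 N, p n * ψ n) ^ 2
            + ∑ n ∈ Finset.Icc 1 N, p n * ψ n)))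
      ∧ (1 ≤ ∑ n ∈ Finset.Icc 1 N, p n * ψ n →
          ∫⁻ ω, ∑ m ∈ Finset.Icc 1 N, ∑ n ∈ Finset.Icc 1 N,
              volume (EQset ε (P ω) ψ m ∩ EQset ε (P ω) ψ n) ∂μ
            ≤ ENNReal.ofReal (2 * C' * (∑ n ∈ Finset.Icc 1 N, p n * ψ n) ^ 2)) := by
  obtain ⟨K, hK0, hK⟩ := exists_sum_resonant_le hε.1.le hε.2.le (fun n ↦ (hp n).2) hdecay
  refine ⟨10 + 2 * K, by positivity, fun N ↦ ?_⟩
  set S := ∑ n ∈ Finset.Icc 1 N, p n * ψ n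
  have hS : 0 ≤ S := Finset.sum_nonneg fun n _ ↦ mul_nonneg (hp n).1 (hψ n).1
  have hmain : ∫⁻ ω, ∑ m ∈ Finset.Icc 1 N, ∑ n ∈ Finset.Icc 1 N,
      volume (EQset ε (P ω) ψ m ∩ EQset ε (P ω) ψ n) ∂μ
      ≤ ENNReal.ofReal ((10 + 2 * K) * (S ^ 2 + S)) := by
    refine (lintegral_sum_sum_volume_EQset_inter_le hPmeas hPprob hPindep (fun n ↦ (hp n).1) hψ
      _ fun m hm ↦ (Finset.mem_Icc.1 hm).1).trans (ENNReal.ofReal_le_ofReal ?_)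
    refine (sum_sum_overlapBound_le (fun n ↦ (hp n).1) (fun n ↦ (hψ n).1) _
      fun m hm ↦ hK m (Finset.mem_Icc.1 hm).1 N).trans ?_
    nlinarith
  refine ⟨hmain, fun hS1 ↦ hmain.trans (ENNReal.ofReal_le_ofReal ?_)⟩
  nlinarith [mul_le_mul_of_nonneg_left (by nlinarith : S ≤ S ^ 2) (by linarith : 0 ≤ 10 + 2 * K)]

/-- Expected average overlap estimate: `E[∑_{m,n ≤ N} λ(E_m^Q ∩ E_n^Q)]
≪ (∑_{n ≤ N} pₙψ(n))² + ∑_{n ≤ N} pₙψ(n)`. -/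
theorem stmt7
    {Ω : Type*} [MeasurableSpace Ω] (μ : Measure Ω) [IsProbabilityMeasure μ]
    (ε : ℝ) (hε : ε ∈ Set.Ioo (0 : ℝ) 1)
    (p : ℕ → ℝ) (hp : ∀ n, p n ∈ Set.Icc (0 : ℝ) 1)
    (C : ℝ) (hdecay : ∀ᶠ n : ℕ in atTop, p n ≤ C * Real.log n ^ (-ε))
    (P : Ω → ℕ → Set ℕ)
    (hPsub : ∀ ω n, P ω n ⊆ Set.Icc 1 n)
    (hPmeas : ∀ n a : ℕ, MeasurableSet {ω | a ∈ P ω n})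
    (hPprob : ∀ n a : ℕ, 1 ≤ a → a ≤ n → μ {ω | a ∈ P ω n} = ENNReal.ofReal (p n))
    (hPindep : iIndepSet (fun q : ℕ × ℕ => {ω | q.2 ∈ P ω q.1}) μ)
    (ψ : ℕ → ℝ) (hψ : ∀ k, ψ k ∈ Set.Icc (0 : ℝ) (1 / 2)) :
    ∃ C' > (0 : ℝ), ∀ N : ℕ,
      (∫⁻ ω, ∑ m ∈ Finset.Icc 1 N, ∑ n ∈ Finset.Icc 1 N,
          volume (EQset ε (P ω) ψ m ∩ EQset ε (P ω) ψ n) ∂μ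
        ≤ ENNReal.ofReal (C' * ((∑ n ∈ Finset.Icc 1 N, p n * ψ n) ^ 2
            + ∑ n ∈ Finset.Icc 1 N, p n * ψ n)))
      ∧ (1 ≤ ∑ n ∈ Finset.Icc 1 N, p n * ψ n →
          ∫⁻ ω, ∑ m ∈ Finset.Icc 1 N, ∑ n ∈ Finset.Icc 1 N,
              volume (EQset ε (P ω) ψ m ∩ EQset ε (P ω) ψ n) ∂μ
            ≤ ENNReal.ofReal (2 * C' * (∑ n ∈ Finset.Icc 1 N, p n * ψ n) ^ 2)) :=
  stmt7_general μ ε hε p hp C hdecay P hPmeas hPprob hPindep ψ hψ
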